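/- arXiv:1506.03265 — 2 statements merged into one kernel-verified Lean document; each statement's English description precedes it below -/
import Mathlib

section
/- With the quotient graph G_C defined as above from a clustering of radius R where each d_u is the exact distance from u to its center c_u, every edge weight in G_C corresponds to the weight of an actual walk in G between the two cluster centers; hence for any two cluster centers c, c′, the distance in G_C between their clusters is at least dist_G(c, c′). In particular the estimate Φ_approx(G) = Φ(G_C) + 2R is an upper bound: Φ(G) ≤ Φ_approx(G). -/
/-- `l` is a walk from `u` to `v` in the graph with edge relation `E`. -/
def WalkFrom {V : Type*} (E : V → V → Prop) (u v : V) (l : List V) : Prop :=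
  l ≠ [] ∧ l.Chain' E ∧ l.head? = some u ∧ l.getLast? = some v

/-- total weight of a walk given by the list of its vertices -/
def wgt {V : Type*} (w : V → V → ℝ) (l : List V) : ℝ :=
  ((l.zip l.tail).map fun p => w p.1 p.2).sum

/-- weighted shortest-path distance -/
noncomputable def gdist {V : Type*} (E : V → V → Prop) (w : V → V → ℝ) (u v : V) : ℝ :=
  sInf {x | ∃ l, WalkFrom E u v l ∧ wgt w l = x}

/-- edge relation of the quotient graph: clusters `i ≠ j` are adjacent iff some
edge of `G` crosses between them -/
def EC {V : Type*} {τ : ℕ} (E : V → V → Prop) (cl : V → Fin τ) :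
    Fin τ → Fin τ → Prop :=
  fun i j => i ≠ j ∧ ∃ u v, E u v ∧ cl u = i ∧ cl v = j

/-- weight of a quotient edge: the minimum over crossing edges `(u,v)` of
`w(u,v) + d_u + d_v`, where `d_u = dist(u, center of u's cluster)` -/
noncomputable def wC {V : Type*} {τ : ℕ} (E : V → V → Prop) (w : V → V → ℝ)
    (cl : V → Fin τ) (ctr : Fin τ → V) : Fin τ → Fin τ → ℝ :=
  fun i j => sInf {x | ∃ u v, E u v ∧ cl u = i ∧ cl v = j ∧
    x = w u v + gdist E w u (ctr i) + gdist E w v (ctr j)}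

/-- weighted diameter -/
noncomputable def diam {V : Type*} (E : V → V → Prop) (w : V → V → ℝ) : ℝ :=
  ⨆ u, ⨆ v, gdist E w u v

section Aux

variable {V : Type*} {E : V → V → Prop} {w : V → V → ℝ}

lemma wgt_nil (w : V → V → ℝ) : wgt w ([] : List V) = 0 := by simp [wgt]

lemma wgt_single (w : V → V → ℝ) (a : V) : wgt w [a] = 0 := by simp [wgt]

lemma wgt_cons_cons (w : V → V → ℝ) (a b : V) (t : List V) :
    wgt w (a :: b :: t) = w a b + wgt w (b :: t) := by simp [wgt]

lemma wgt_nonneg (hpos : ∀ u v, E u v → 0 < w u v) :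
    ∀ l : List V, l.Chain' E → 0 ≤ wgt w l
  | [] => fun _ => by simp [wgt]
  | [a] => fun _ => by simp [wgt]
  | a :: b :: t => fun h => by
      rw [wgt_cons_cons]
      have h1 : E a b := (List.isChain_cons_cons.mp h).1
      have h2 := wgt_nonneg hpos (b :: t) (List.isChain_cons_cons.mp h).2
      have h3 := hpos a b h1
      linarith

lemma wgt_append (w : V → V → ℝ) :
    ∀ (l1 : List V) (x : V) (t : List V), l1.getLast? = some x →
      wgt w (l1 ++ t) = wgt w l1 + wgt w (x :: t)
  | [], x, t => fun h => by simp at h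
  | [a], x, t => fun h => by
      simp only [List.getLast?_singleton, Option.some.injEq] at h
      subst h
      simp [wgt_single]
  | a :: b :: s, x, t => fun h => by
      have h' : (b :: s).getLast? = some x := by
        rwa [List.getLast?_cons_cons] at h
      have IH := wgt_append w (b :: s) x t h'
      have e1 : (a :: b :: s) ++ t = a :: b :: (s ++ t) := by simp
      rw [e1, wgt_cons_cons, wgt_cons_cons w a b s]
      have e2 : (b :: s) ++ t = b :: (s ++ t) := by simp
      rw [e2] at IH
      linarith

lemma walk_set_nonempty (hconn : ∀ u v : V, ∃ l, WalkFrom E u v l) (u v : V) :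
    Set.Nonempty {x | ∃ l, WalkFrom E u v l ∧ wgt w l = x} := by
  obtain ⟨l, hl⟩ := hconn u v
  exact ⟨wgt w l, l, hl, rfl⟩

lemma walk_set_bddBelow (hpos : ∀ u v, E u v → 0 < w u v) (u v : V) :
    BddBelow {x | ∃ l, WalkFrom E u v l ∧ wgt w l = x} :=
  ⟨0, by rintro x ⟨l, hl, rfl⟩; exact wgt_nonneg hpos l hl.2.1⟩

lemma gdist_le_wgt (hpos : ∀ u v, E u v → 0 < w u v) {u v : V} {l : List V}
    (h : WalkFrom E u v l) : gdist E w u v ≤ wgt w l :=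
  csInf_le (walk_set_bddBelow hpos u v) ⟨l, h, rfl⟩

lemma gdist_self_le (hpos : ∀ u v, E u v → 0 < w u v) (u : V) :
    gdist E w u u ≤ 0 := by
  have h : WalkFrom E u u [u] := ⟨by simp, List.isChain_singleton _, rfl, rfl⟩
  have := gdist_le_wgt hpos h
  rwa [wgt_single] at this

lemma gdist_le_w (hpos : ∀ u v, E u v → 0 < w u v) {u v : V} (h : E u v) :
    gdist E w u v ≤ w u v := by
  have hw : WalkFrom E u v [u, v] := ⟨by simp, List.isChain_pair.mpr h, rfl, rfl⟩
  have := gdist_le_wgt hpos hw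
  rwa [wgt_cons_cons, wgt_single, add_zero] at this

lemma walk_append {u x v : V} {l1 l2 : List V}
    (h1 : WalkFrom E u x l1) (h2 : WalkFrom E x v l2) :
    WalkFrom E u v (l1 ++ l2.tail) ∧ wgt w (l1 ++ l2.tail) = wgt w l1 + wgt w l2 := by
  obtain ⟨hne1, hch1, hh1, hl1⟩ := h1
  obtain ⟨hne2, hch2, hh2, hl2⟩ := h2
  obtain ⟨y, t, rfl⟩ := List.exists_cons_of_ne_nil hne2
  have hyx : x = y := by symm; simpa using hh2
  subst hyx
  have hcht : t.Chain' E := (List.isChain_cons.mp hch2).2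
  have hjun : ∀ z ∈ t.head?, E x z := (List.isChain_cons.mp hch2).1
  constructor
  · refine ⟨by simp [hne1], ?_, ?_, ?_⟩
    · refine List.isChain_append.mpr ⟨hch1, hcht, ?_⟩
      intro a ha b hb
      rw [hl1] at ha
      simp only [Option.mem_def, Option.some.injEq] at ha
      subst ha
      exact hjun b hb
    · simp only [List.tail_cons]
      obtain ⟨c, s, rfl⟩ := List.exists_cons_of_ne_nil hne1
      simpa using hh1
    · simp only [List.tail_cons]
      cases t with
      | nil =>
          simp only [List.append_nil]
          have : x = v := by simpa using hl2
          rw [hl1, this]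
      | cons c s =>
          rw [List.getLast?_append_of_ne_nil l1 (by simp)]
          rwa [List.getLast?_cons_cons] at hl2
  · simpa using wgt_append w l1 x t hl1

lemma gdist_triangle (hpos : ∀ u v, E u v → 0 < w u v)
    (hconn : ∀ u v : V, ∃ l, WalkFrom E u v l) (u x v : V) :
    gdist E w u v ≤ gdist E w u x + gdist E w x v := by
  have key : gdist E w u v - gdist E w x v ≤ gdist E w u x := by
    refine le_csInf (walk_set_nonempty hconn u x) ?_
    rintro a ⟨l1, hl1, rfl⟩
    have : gdist E w u v - wgt w l1 ≤ gdist E w x v := by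
      refine le_csInf (walk_set_nonempty hconn x v) ?_
      rintro b ⟨l2, hl2, rfl⟩
      obtain ⟨hw, heq⟩ := walk_append (w := w) hl1 hl2
      have := gdist_le_wgt hpos hw
      linarith
    linarith
  linarith

lemma walk_reverse (hsym : ∀ u v, E u v → E v u) {u v : V} {l : List V}
    (h : WalkFrom E u v l) : WalkFrom E v u l.reverse := by
  obtain ⟨hne, hch, hh, hl⟩ := h
  refine ⟨by simpa using hne, ?_, ?_, ?_⟩
  · refine List.isChain_reverse.mpr ?_
    exact hch.imp fun a b hab => hsym a b hab
  · rw [List.head?_reverse]; exact hl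
  · rw [List.getLast?_reverse]; exact hh

lemma wgt_reverse (hwsym : ∀ u v, w u v = w v u) :
    ∀ l : List V, wgt w l.reverse = wgt w l
  | [] => by simp
  | [a] => by simp [wgt]
  | a :: b :: t => by
      have IH := wgt_reverse hwsym (b :: t)
      have e1 : (a :: b :: t).reverse = (b :: t).reverse ++ [a] := by simp
      rw [e1, wgt_append w _ b [a] (by rw [List.getLast?_reverse]; rfl), IH,
        wgt_cons_cons, wgt_cons_cons, wgt_single, hwsym b a]
      ring

lemma gdist_symm (hsym : ∀ u v, E u v → E v u) (hwsym : ∀ u v, w u v = w v u)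
    (hpos : ∀ u v, E u v → 0 < w u v)
    (hconn : ∀ u v : V, ∃ l, WalkFrom E u v l) (u v : V) :
    gdist E w u v = gdist E w v u := by
  have key : ∀ a b : V, gdist E w a b ≤ gdist E w b a := by
    intro a b
    refine le_csInf (walk_set_nonempty hconn b a) ?_
    rintro x ⟨l, hl, rfl⟩
    have h1 := gdist_le_wgt hpos (walk_reverse hsym hl)
    rwa [wgt_reverse hwsym] at h1
  exact le_antisymm (key u v) (key v u)

end Aux

section Quot

variable {V : Type*} {τ : ℕ} {E : V → V → Prop} {w : V → V → ℝ}

lemma quot_walk (cl : V → Fin τ) :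
    ∀ l : List V, l.Chain' E → ∀ u v : V, l.head? = some u → l.getLast? = some v →
      ∃ L, WalkFrom (EC E cl) (cl u) (cl v) L
  | [] => fun _ u v hu _ => by simp at hu
  | [a] => fun _ u v hu hv => by
      simp only [List.head?_cons, Option.some.injEq] at hu
      simp only [List.getLast?_singleton, Option.some.injEq] at hv
      subst hu; subst hv
      exact ⟨[cl a], by simp, List.isChain_singleton _, rfl, rfl⟩
  | a :: b :: t => fun hch u v hu hv => by
      simp only [List.head?_cons, Option.some.injEq] at hu
      subst hu
      have hE : E a b := (List.isChain_cons_cons.mp hch).1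
      rw [List.getLast?_cons_cons] at hv
      obtain ⟨L, hL⟩ := quot_walk cl (b :: t) (List.isChain_cons_cons.mp hch).2 b v rfl hv
      by_cases hc : cl a = cl b
      · exact ⟨L, hc ▸ hL⟩
      · obtain ⟨hne, hch', hh, hl⟩ := hL
        refine ⟨cl a :: L, by simp, ?_, rfl, ?_⟩
        · refine List.isChain_cons.mpr ⟨?_, hch'⟩
          intro y hy
          rw [hh] at hy
          simp only [Option.mem_def, Option.some.injEq] at hy
          subst hy
          exact ⟨hc, a, b, hE, rfl, rfl⟩
        · obtain ⟨c, s, rfl⟩ := List.exists_cons_of_ne_nil hne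
          rwa [List.getLast?_cons_cons]

lemma wC_ge (hsym : ∀ u v, E u v → E v u) (hwsym : ∀ u v, w u v = w v u)
    (hpos : ∀ u v, E u v → 0 < w u v)
    (hconn : ∀ u v : V, ∃ l, WalkFrom E u v l)
    (cl : V → Fin τ) (ctr : Fin τ → V) {i j : Fin τ} (hE : EC E cl i j) :
    gdist E w (ctr i) (ctr j) ≤ wC E w cl ctr i j := by
  obtain ⟨hne, u0, v0, he0, hu0, hv0⟩ := hE
  refine le_csInf ⟨_, u0, v0, he0, hu0, hv0, rfl⟩ ?_
  rintro x ⟨u, v, he, hu, hv, rfl⟩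
  have t1 := gdist_triangle hpos hconn (ctr i) u (ctr j)
  have t2 := gdist_triangle hpos hconn u v (ctr j)
  have t3 := gdist_le_w hpos he
  have t4 := gdist_symm hsym hwsym hpos hconn (ctr i) u
  linarith

lemma quot_wgt_ge (hsym : ∀ u v, E u v → E v u) (hwsym : ∀ u v, w u v = w v u)
    (hpos : ∀ u v, E u v → 0 < w u v)
    (hconn : ∀ u v : V, ∃ l, WalkFrom E u v l)
    (cl : V → Fin τ) (ctr : Fin τ → V) :
    ∀ L : List (Fin τ), L.Chain' (EC E cl) → ∀ i j : Fin τ,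
      L.head? = some i → L.getLast? = some j →
      gdist E w (ctr i) (ctr j) ≤ wgt (wC E w cl ctr) L
  | [] => fun _ i j hi _ => by simp at hi
  | [k] => fun _ i j hi hj => by
      simp only [List.head?_cons, Option.some.injEq] at hi
      simp only [List.getLast?_singleton, Option.some.injEq] at hj
      subst hi; subst hj
      rw [wgt_single]
      exact gdist_self_le hpos _
  | i' :: k :: t => fun hch i j hi hj => by
      simp only [List.head?_cons, Option.some.injEq] at hi
      subst hi
      rw [List.getLast?_cons_cons] at hj
      have hE : EC E cl i' k := (List.isChain_cons_cons.mp hch).1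
      have IH := quot_wgt_ge hsym hwsym hpos hconn cl ctr (k :: t)
        (List.isChain_cons_cons.mp hch).2 k j rfl hj
      have h1 := wC_ge (w := w) hsym hwsym hpos hconn cl ctr hE
      have h2 := gdist_triangle hpos hconn (ctr i') (ctr k) (ctr j)
      rw [wgt_cons_cons]
      linarith

end Quot

theorem stmt6 {V : Type*} [Fintype V] [Nonempty V]
    (E : V → V → Prop) (w : V → V → ℝ)
    (hsym : ∀ u v, E u v → E v u) (hwsym : ∀ u v, w u v = w v u)
    (hpos : ∀ u v, E u v → 0 < w u v)
    (hconn : ∀ u v : V, ∃ l, WalkFrom E u v l)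
    (τ : ℕ) (cl : V → Fin τ) (ctr : Fin τ → V)
    (hctr : ∀ i, cl (ctr i) = i)
    (R : ℝ) (hR : ∀ u, gdist E w u (ctr (cl u)) ≤ R) :
    (∀ i j, gdist E w (ctr i) (ctr j) ≤ gdist (EC E cl) (wC E w cl ctr) i j) ∧
      diam E w ≤ diam (EC E cl) (wC E w cl ctr) + 2 * R := by
  have part1 : ∀ i j, gdist E w (ctr i) (ctr j) ≤ gdist (EC E cl) (wC E w cl ctr) i j := by
    intro i j
    obtain ⟨l, hl⟩ := hconn (ctr i) (ctr j)
    obtain ⟨L, hL⟩ := quot_walk cl l hl.2.1 (ctr i) (ctr j) hl.2.2.1 hl.2.2.2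
    rw [hctr i, hctr j] at hL
    refine le_csInf ⟨wgt (wC E w cl ctr) L, L, hL, rfl⟩ ?_
    rintro x ⟨L', hL', rfl⟩
    exact quot_wgt_ge hsym hwsym hpos hconn cl ctr L' hL'.2.1 i j hL'.2.2.1 hL'.2.2.2
  refine ⟨part1, ?_⟩
  show (⨆ u, ⨆ v, gdist E w u v) ≤ _
  refine ciSup_le fun u => ciSup_le fun v => ?_
  have t1 := gdist_triangle hpos hconn u (ctr (cl u)) v
  have t2 := gdist_triangle hpos hconn (ctr (cl u)) (ctr (cl v)) v
  have t3 := hR u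
  have t4 : gdist E w (ctr (cl v)) v ≤ R := by
    rw [gdist_symm hsym hwsym hpos hconn]; exact hR v
  have t5 := part1 (cl u) (cl v)
  have t6 : gdist (EC E cl) (wC E w cl ctr) (cl u) (cl v) ≤
      diam (EC E cl) (wC E w cl ctr) := by
    have b1 : BddAbove (Set.range fun j => gdist (EC E cl) (wC E w cl ctr) (cl u) j) :=
      (Set.finite_range _).bddAbove
    have b2 : BddAbove (Set.range fun i => ⨆ j, gdist (EC E cl) (wC E w cl ctr) i j) :=
      (Set.finite_range _).bddAbove
    calc gdist (EC E cl) (wC E w cl ctr) (cl u) (cl v)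
        ≤ ⨆ j, gdist (EC E cl) (wC E w cl ctr) (cl u) j := le_ciSup b1 (cl v)
      _ ≤ ⨆ i, ⨆ j, gdist (EC E cl) (wC E w cl ctr) i j := le_ciSup b2 (cl u)
      _ = diam (EC E cl) (wC E w cl ctr) := rfl
  linarith
end

section
/- In the synchronous parallel Bellman–Ford relaxation process from a source set X with the restriction that only edges of weight ≤ Δ are relaxed and updates are only accepted when the new tentative distance is ≤ Δ (a 'Δ-growing step'), the tentative distance d_v of every node v is, at every step, at least the true Δ-light distance from X to v, where the Δ-light distance uses only paths of total weight ≤ Δ consisting of edges of weight ≤ Δ; and after ℓ_Δ steps every node at Δ-light distance ≤ Δ from X attains d_v equal to its Δ-light distance from X. -/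
open scoped ENNReal

/-- total weight of a walk given by the list of its vertices -/
noncomputable def wgtE {V : Type*} (w : V → V → ℝ≥0∞) (l : List V) : ℝ≥0∞ :=
  ((l.zip l.tail).map fun p => w p.1 p.2).sum

/-- distance from the source set `X` with respect to an edge relation -/
noncomputable def distX {V : Type*} (E : V → V → Prop) (w : V → V → ℝ≥0∞)
    (X : Set V) (v : V) : ℝ≥0∞ :=
  ⨅ s ∈ X, ⨅ l : List V, ⨅ (_ : WalkFrom E s v l), wgtE w l

/-- the light edge relation: edges of weight at most `Δ` -/
def lightE {V : Type*} (E : V → V → Prop) (w : V → V → ℝ≥0∞) (Δ : ℝ≥0∞) :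
    V → V → Prop :=
  fun u v => E u v ∧ w u v ≤ Δ

/-- a `Δ`-growing step: relax, in parallel, every light edge `(u,v)` with
`d_u < Δ`, accepting the update only if the new value is at most `Δ` -/
noncomputable def growStep {V : Type*} (E : V → V → Prop) (w : V → V → ℝ≥0∞)
    (Δ : ℝ≥0∞) (d : V → ℝ≥0∞) : V → ℝ≥0∞ :=
  fun v => d v ⊓
    ⨅ u, ⨅ (_ : E u v ∧ w u v ≤ Δ ∧ d u < Δ ∧ d u + w u v ≤ Δ), d u + w u v

/-- initial tentative distances: `0` on the sources, `∞` elsewhere -/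
noncomputable def dInit {V : Type*} (X : Set V) : V → ℝ≥0∞ :=
  fun v => ⨅ (_ : v ∈ X), 0

/-!
The lower bound is an invariant: every value `d_u + w(u,v)` accepted by a growing step is the
length of a light walk from `X` to `u` extended by the light edge `(u,v)`. For the upper bound,
follow a minimum-weight light walk `u₀ u₁ … u_k` from a source: by induction along the walk,
after `i` steps `d_{u_i}` is at most the weight of the prefix up to `u_i`. That prefix weight is
at most `Δ`, and strictly below `Δ` before the last edge because weights are positive and the
walk has finite weight, so every relaxation along the walk is accepted.
-/

section Walks

variable {V : Type*} (E : V → V → Prop) (w : V → V → ℝ≥0∞)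

@[simp]
lemma wgtE_singleton (a : V) : wgtE w [a] = 0 := by simp [wgtE]

lemma wgtE_cons_cons (a b : V) (l : List V) :
    wgtE w (a :: b :: l) = w a b + wgtE w (b :: l) := by
  simp [wgtE]

lemma wgtE_append_singleton : ∀ {l : List V} {u : V} (v : V), l.getLast? = some u →
    wgtE w (l ++ [v]) = wgtE w l + w u v
  | [], _, _, h => by simp at h
  | [a], u, v, h => by
    obtain rfl : a = u := by simpa using h
    simp [wgtE]
  | a :: b :: l, u, v, h => by
    rw [List.getLast?_cons_cons] at h
    rw [List.cons_append, List.cons_append, wgtE_cons_cons, ← List.cons_append,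
      wgtE_append_singleton v h, wgtE_cons_cons, add_assoc]

variable {E}

lemma walkFrom_iff {u v : V} {l : List V} :
    WalkFrom E u v l ↔ l ≠ [] ∧ l.IsChain E ∧ l.head? = some u ∧ l.getLast? = some v :=
  Iff.rfl

lemma walkFrom_singleton_iff {u v x : V} : WalkFrom E u v [x] ↔ x = u ∧ x = v := by
  simp [walkFrom_iff, eq_comm]

lemma walkFrom_cons_cons_iff {u v x y : V} {l : List V} :
    WalkFrom E u v (x :: y :: l) ↔ x = u ∧ E x y ∧ WalkFrom E y v (y :: l) := by
  simp [walkFrom_iff, List.getLast?_cons_cons, List.isChain_cons_cons, and_assoc, and_left_comm]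

lemma WalkFrom.append_singleton {s u v : V} {l : List V} (h : WalkFrom E s u l)
    (huv : E u v) : WalkFrom E s v (l ++ [v]) := by
  obtain ⟨hne, hchain, hhead, hlast⟩ := h
  refine ⟨by simp, hchain.append (List.isChain_singleton v) ?_, ?_, by simp⟩
  · intro x hx y hy
    rw [hlast, Option.mem_some_iff] at hx
    rw [List.head?_cons, Option.mem_some_iff] at hy
    subst hx hy
    exact huv
  · rwa [List.head?_append_of_ne_nil _ hne]

lemma distX_le_wgtE {X : Set V} {s v : V} {l : List V} (hs : s ∈ X)
    (hl : WalkFrom E s v l) : distX E w X v ≤ wgtE w l :=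
  (iInf₂_le s hs).trans ((iInf_le _ l).trans (iInf_le _ hl))

lemma distX_le_add {X : Set V} {u v : V} (huv : E u v) :
    distX E w X v ≤ distX E w X u + w u v := by
  simp only [distX, ENNReal.iInf_add]
  refine le_iInf₂ fun s hs => le_iInf₂ fun l hl => ?_
  rw [← wgtE_append_singleton w v hl.2.2.2]
  exact distX_le_wgtE w hs (hl.append_singleton huv)

end Walks

section GrowStep

variable {V : Type*} {E : V → V → Prop} {w : V → V → ℝ≥0∞} {Δ : ℝ≥0∞}

lemma dInit_of_mem {X : Set V} {s : V} (hs : s ∈ X) : dInit X s = 0 := by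
  simp [dInit, hs]

lemma growStep_le_self (d : V → ℝ≥0∞) (v : V) : growStep E w Δ d v ≤ d v :=
  inf_le_left

lemma iterate_growStep_le_self (n : ℕ) (d : V → ℝ≥0∞) (v : V) :
    (growStep E w Δ)^[n] d v ≤ d v := by
  induction n generalizing d with
  | zero => rfl
  | succ n ih => exact (ih _).trans (growStep_le_self d v)

lemma growStep_le_add {d : V → ℝ≥0∞} {u v : V} (huv : lightE E w Δ u v)
    (hu : d u < Δ) (hle : d u + w u v ≤ Δ) : growStep E w Δ d v ≤ d u + w u v :=
  inf_le_right.trans ((iInf_le _ u).trans (iInf_le _ ⟨huv.1, huv.2, hu, hle⟩))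

lemma distX_le_growStep {X : Set V} {d : V → ℝ≥0∞}
    (hd : ∀ u, distX (lightE E w Δ) w X u ≤ d u) (v : V) :
    distX (lightE E w Δ) w X v ≤ growStep E w Δ d v := by
  refine le_inf (hd v) (le_iInf₂ fun u huv => ?_)
  calc distX (lightE E w Δ) w X v ≤ distX (lightE E w Δ) w X u + w u v :=
        distX_le_add w ⟨huv.1, huv.2.1⟩
    _ ≤ d u + w u v := by gcongr; exact hd u

lemma distX_le_dInit (X : Set V) (v : V) : distX (lightE E w Δ) w X v ≤ dInit X v :=
  le_iInf fun hv => (distX_le_wgtE w hv (walkFrom_singleton_iff.2 ⟨rfl, rfl⟩)).trans_eq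
    (wgtE_singleton w v)

lemma distX_le_iterate_growStep (X : Set V) (t : ℕ) (v : V) :
    distX (lightE E w Δ) w X v ≤ (growStep E w Δ)^[t] (dInit X) v := by
  induction t generalizing v with
  | zero => exact distX_le_dInit X v
  | succ t ih =>
    rw [Function.iterate_succ_apply']
    exact distX_le_growStep ih v

lemma iterate_growStep_le_add_wgtE (hpos : ∀ u v, E u v → 0 < w u v) {v : V} :
    ∀ {l : List V} {u : V} {d : V → ℝ≥0∞} {a : ℝ≥0∞}, WalkFrom (lightE E w Δ) u v l →
      d u ≤ a → a + wgtE w l ≤ Δ → a + wgtE w l ≠ ⊤ →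
      (growStep E w Δ)^[l.length - 1] d v ≤ a + wgtE w l
  | [], _, _, _, hl, _, _, _ => absurd rfl hl.1
  | [x], u, d, a, hl, hu, _, _ => by
    obtain ⟨rfl, rfl⟩ := walkFrom_singleton_iff.1 hl
    simpa using hu
  | x :: y :: l, u, d, a, hl, hu, hΔ, hfin => by
    obtain ⟨rfl, hxy, hl⟩ := walkFrom_cons_cons_iff.1 hl
    rw [wgtE_cons_cons, ← add_assoc] at hΔ hfin ⊢
    have hstep : a + w x y ≤ Δ := le_self_add.trans hΔ
    have ha : a < Δ := by
      refine (ENNReal.lt_add_right ?_ (hpos x y hxy.1).ne').trans_le hstep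
      exact (ENNReal.add_ne_top.1 (ENNReal.add_ne_top.1 hfin).1).1
    have hxa : d x + w x y ≤ a + w x y := by gcongr
    have hy : growStep E w Δ d y ≤ a + w x y :=
      (growStep_le_add hxy (hu.trans_lt ha) (hxa.trans hstep)).trans hxa
    simpa [Function.iterate_succ_apply] using
      iterate_growStep_le_add_wgtE hpos hl hy hΔ hfin

end GrowStep

theorem stmt11_general {V : Type*}
    (E : V → V → Prop) (w : V → V → ℝ≥0∞)
    (hpos : ∀ u v, E u v → 0 < w u v)
    (X : Set V)
    (Δ : ℝ≥0∞) :
    (∀ (t : ℕ) (v : V),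
      distX (lightE E w Δ) w X v ≤ (growStep E w Δ)^[t] (dInit X) v) ∧
    (∀ ℓ : ℕ,
      (∀ v : V, distX (lightE E w Δ) w X v ≤ Δ →
        ∃ s ∈ X, ∃ l, WalkFrom (lightE E w Δ) s v l ∧
          wgtE w l = distX (lightE E w Δ) w X v ∧ l.length - 1 ≤ ℓ) →
      ∀ v : V, distX (lightE E w Δ) w X v ≤ Δ →
        (growStep E w Δ)^[ℓ] (dInit X) v = distX (lightE E w Δ) w X v) := by
  refine ⟨distX_le_iterate_growStep X, fun ℓ hwalks v hv => ?_⟩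
  refine le_antisymm ?_ (distX_le_iterate_growStep X ℓ v)
  rcases eq_or_ne (distX (lightE E w Δ) w X v) ⊤ with htop | hfin
  · exact htop ▸ le_top
  obtain ⟨s, hs, l, hl, hwgt, hlen⟩ := hwalks v hv
  have hshort := iterate_growStep_le_add_wgtE hpos hl (dInit_of_mem hs).le
    (by rwa [zero_add, hwgt]) (by rwa [zero_add, hwgt])
  rw [zero_add, hwgt] at hshort
  calc (growStep E w Δ)^[ℓ] (dInit X) v
      = (growStep E w Δ)^[ℓ - (l.length - 1)]
          ((growStep E w Δ)^[l.length - 1] (dInit X)) v := by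
        rw [← Function.iterate_add_apply, Nat.sub_add_cancel hlen]
    _ ≤ distX (lightE E w Δ) w X v := (iterate_growStep_le_self _ _ v).trans hshort

theorem stmt11 {V : Type*} [Fintype V]
    (E : V → V → Prop) (w : V → V → ℝ≥0∞)
    (hsym : ∀ u v, E u v → E v u) (hwsym : ∀ u v, w u v = w v u)
    (hpos : ∀ u v, E u v → 0 < w u v)
    (X : Set V) (hX : X.Nonempty)
    (Δ : ℝ≥0∞) (hΔ : 0 < Δ) (hΔtop : Δ ≠ ⊤) :
    (∀ (t : ℕ) (v : V),
      distX (lightE E w Δ) w X v ≤ (growStep E w Δ)^[t] (dInit X) v) ∧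
    (∀ ℓ : ℕ,
      (∀ v : V, distX (lightE E w Δ) w X v ≤ Δ →
        ∃ s ∈ X, ∃ l, WalkFrom (lightE E w Δ) s v l ∧
          wgtE w l = distX (lightE E w Δ) w X v ∧ l.length - 1 ≤ ℓ) →
      ∀ v : V, distX (lightE E w Δ) w X v ≤ Δ →
        (growStep E w Δ)^[ℓ] (dInit X) v = distX (lightE E w Δ) w X v) :=
  stmt11_general E w hpos X Δ
end
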